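/- arXiv:2507.17541 — 2 statements merged into one kernel-verified Lean document; each statement's English description precedes it below -/
import Mathlib

section
/- For every temporal graph 𝒢 with lifetime T in which every snapshot has at least one edge, every tuning parameter ω ≥ 0, and every partition 𝒜 of 𝒢, the temporal modularity satisfies −1/2 ≤ q_ω(𝒢,𝒜) ≤ 1. -/
/-! A part `A` of a snapshot with `m` edges contributes `2e(A) − vol(A)²/(2m)`. This is at most
`vol(A)`, and at least `−vol(A)/2` because `vol(A) ≤ 2m` and `2 vol(A) ≤ 2e(A) + 2m` (the edges
leaving `A` are counted again in the volume of the complement). The volumes of the parts add up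
to `2m`, so each snapshot term lies in `[−m, 2m]`; the loyalty term lies in `[0, ω n (T − 1)]`,
hence the numerator of `q_ω` lies in `[−μ_ω, 2μ_ω]`. -/

open Finset
open scoped Classical

namespace TemporalModularity

noncomputable section

variable {V : Type*} [Fintype V] {P : Type*}

/-- Twice the number of edges of `G` with both endpoints in `A`
(the sum over ordered pairs of vertices of `A` of the adjacency indicator). -/
def twoE (G : SimpleGraph V) (A : Finset V) : ℝ :=
  ∑ u ∈ A, ∑ v ∈ A, if G.Adj u v then (1 : ℝ) else 0

/-- The degree of `v` in `G`, as a real number. -/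
def deg (G : SimpleGraph V) (v : V) : ℝ :=
  ∑ u : V, if G.Adj v u then (1 : ℝ) else 0

/-- The number of edges of `G` (half the sum of the degrees), as a real number. -/
def numEdges (G : SimpleGraph V) : ℝ := (∑ v : V, deg G v) / 2

/-- The volume of `A` in `G`: the sum of the degrees of the vertices of `A`. -/
def vol (G : SimpleGraph V) (A : Finset V) : ℝ := ∑ v ∈ A, deg G v

/-- The part with label `p` of the vertex partition induced by the labelling `π`. -/
def part (π : V → P) (p : P) : Finset V := univ.filter fun v => π v = p

/-- `Σ_{A ∈ 𝒜} (2 e_G(A) − vol_G(A)² / (2m))`, where `𝒜` is the partition of the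
vertices induced by the labelling `π` (empty parts contribute zero). -/
def snapTerm (G : SimpleGraph V) (π : V → P) : ℝ :=
  ∑ p ∈ univ.image π,
    (twoE G (part π p) - vol G (part π p) ^ 2 / (2 * numEdges G))

/-- The static modularity `q(G,𝒜) = Σ_{A ∈ 𝒜} (e(A)/m − vol(A)²/(4m²))` of the
partition induced by the labelling `π`. -/
def staticQ (G : SimpleGraph V) (π : V → P) : ℝ :=
  ∑ p ∈ univ.image π,
    (twoE G (part π p) / (2 * numEdges G) -
      vol G (part π p) ^ 2 / (4 * numEdges G ^ 2))

/-- The maximum static modularity `q*(G)` over all vertex partitions (every partition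
of `V` is induced by some labelling `V → V`). -/
def staticQStar (G : SimpleGraph V) : ℝ := ⨆ π : V → V, staticQ G π

/-- The loyalty contribution `L(𝒜)` of the temporal partition `π` with lifetime `T`. -/
def loyalty (T : ℕ) (π : V → ℕ → P) : ℝ :=
  ∑ v : V, ∑ t ∈ Icc 1 (T - 1), if π v t = π v (t + 1) then (1 : ℝ) else 0

/-- The per-time loyalty `L(𝒜,t)` of the temporal partition `π`. -/
def loyaltyAt (π : V → ℕ → P) (t : ℕ) : ℝ :=
  ∑ v : V, if π v t = π v (t + 1) then (1 : ℝ) else 0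

/-- The normalisation factor `μ_ω(𝒢) = ω n (T−1)/2 + Σ_t m_t`. -/
def mu (G : ℕ → SimpleGraph V) (T : ℕ) (ω : ℝ) : ℝ :=
  ω * (Fintype.card V) * ((T : ℝ) - 1) / 2 + ∑ t ∈ Icc 1 T, numEdges (G t)

/-- The non-normalised temporal modularity of the restriction of the temporal graph
`G` to the time interval `[a,b]`, for the partition `π`. -/
def qTildeI (G : ℕ → SimpleGraph V) (a b : ℕ) (ω : ℝ) (π : V → ℕ → P) : ℝ :=
  (∑ t ∈ Icc a b, snapTerm (G t) fun v => π v t) +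
    ω * ∑ v : V, ∑ t ∈ Icc a (b - 1), if π v t = π v (t + 1) then (1 : ℝ) else 0

/-- The non-normalised temporal modularity `q̃_ω(𝒢,𝒜)` of the partition `π` of the
temporal graph `G` with lifetime `T`. -/
def qTilde (G : ℕ → SimpleGraph V) (T : ℕ) (ω : ℝ) (π : V → ℕ → P) : ℝ :=
  qTildeI G 1 T ω π

/-- The temporal modularity `q_ω(𝒢,𝒜)` of the partition `π` of the temporal graph `G`
with lifetime `T`. -/
def qTemp (G : ℕ → SimpleGraph V) (T : ℕ) (ω : ℝ) (π : V → ℕ → P) : ℝ :=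
  qTilde G T ω π / (2 * mu G T ω)

/-- The temporal modularity `q*_ω(𝒢)`: the maximum of `q_ω(𝒢,𝒜)` over all partitions
(every partition of `V × [T]` is induced by some labelling into `ℕ`). -/
def qTempStar (G : ℕ → SimpleGraph V) (T : ℕ) (ω : ℝ) : ℝ :=
  ⨆ π : V → ℕ → ℕ, qTemp G T ω π

/-- The temporal `k`-modularity `q*_{k,ω}(𝒢)`: the maximum of `q_ω(𝒢,𝒜)` over all
partitions into at most `k` parts. -/
def qTempStarK (G : ℕ → SimpleGraph V) (T : ℕ) (ω : ℝ) (k : ℕ) : ℝ :=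
  ⨆ π : V → ℕ → Fin k, qTemp G T ω π

/-- The maximum non-normalised temporal modularity of the restriction of `G` to the
time interval `[a,b]`, over all partitions. -/
def qTildeStarI (G : ℕ → SimpleGraph V) (a b : ℕ) (ω : ℝ) : ℝ :=
  ⨆ π : V → ℕ → ℕ, qTildeI G a b ω π

/-- The non-normalised temporal modularity `q̃*_ω(𝒢)` of the temporal graph `G` with
lifetime `T`. -/
def qTildeStar (G : ℕ → SimpleGraph V) (T : ℕ) (ω : ℝ) : ℝ := qTildeStarI G 1 T ω

/-- The maximum non-normalised temporal modularity of the restriction of `G` to `[a,b]`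
over partitions into at most `c` parts. -/
def qTildeStarKI (G : ℕ → SimpleGraph V) (a b : ℕ) (ω : ℝ) (c : ℕ) : ℝ :=
  ⨆ π : V → ℕ → Fin c, qTildeI G a b ω π

/-- The non-normalised temporal `c`-modularity `q̃*_{c,ω}(𝒢)`. -/
def qTildeStarK (G : ℕ → SimpleGraph V) (T : ℕ) (ω : ℝ) (c : ℕ) : ℝ :=
  qTildeStarKI G 1 T ω c

end

lemma twoE_nonneg {V : Type*} (G : SimpleGraph V) (A : Finset V) : 0 ≤ twoE G A :=
  sum_nonneg fun _ _ => sum_nonneg fun _ _ => by positivity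

section Graph

variable {V : Type*} [Fintype V] (G : SimpleGraph V)

lemma deg_nonneg (v : V) : 0 ≤ deg G v :=
  sum_nonneg fun _ _ => by positivity

lemma vol_nonneg (A : Finset V) : 0 ≤ vol G A :=
  sum_nonneg fun v _ => deg_nonneg G v

lemma vol_univ : vol G univ = 2 * numEdges G := by
  rw [vol, numEdges]; ring

lemma numEdges_nonneg : 0 ≤ numEdges G := by
  have := vol_nonneg G univ
  rw [vol_univ] at this
  linarith

lemma vol_add_vol_compl (A : Finset V) : vol G A + vol G Aᶜ = 2 * numEdges G := by
  rw [vol, vol, sum_add_sum_compl, ← vol, vol_univ]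

lemma vol_le_two_mul_numEdges (A : Finset V) : vol G A ≤ 2 * numEdges G := by
  rw [← vol_add_vol_compl G A]
  linarith [vol_nonneg G Aᶜ]

lemma sum_adj_le_deg (A : Finset V) (v : V) :
    ∑ u ∈ A, (if G.Adj v u then (1 : ℝ) else 0) ≤ deg G v :=
  sum_le_sum_of_subset_of_nonneg (subset_univ A) fun _ _ _ => by positivity

lemma twoE_le_vol (A : Finset V) : twoE G A ≤ vol G A :=
  sum_le_sum fun u _ => sum_adj_le_deg G A u

lemma vol_eq_twoE_add_cut (A : Finset V) :
    vol G A = twoE G A + ∑ u ∈ A, ∑ v ∈ Aᶜ, (if G.Adj u v then (1 : ℝ) else 0) := by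
  rw [twoE, ← sum_add_distrib]
  exact sum_congr rfl fun u _ => (sum_add_sum_compl A _).symm

lemma cut_le_vol_compl (A : Finset V) :
    ∑ u ∈ A, ∑ v ∈ Aᶜ, (if G.Adj u v then (1 : ℝ) else 0) ≤ vol G Aᶜ := by
  rw [sum_comm]
  refine sum_le_sum fun v _ => ?_
  simp_rw [G.adj_comm _ v]
  exact sum_adj_le_deg G A v

lemma two_mul_vol_le (A : Finset V) : 2 * vol G A ≤ twoE G A + 2 * numEdges G := by
  linarith [vol_eq_twoE_add_cut G A, cut_le_vol_compl G A, vol_add_vol_compl G A]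

lemma vol_sq_div_le (A : Finset V) :
    vol G A ^ 2 / (2 * numEdges G) ≤ (twoE G A + vol G A) / 2 := by
  have hE := twoE_nonneg G A
  have hv := vol_nonneg G A
  rcases (numEdges_nonneg G).eq_or_lt with hm | hm
  · rw [← hm, mul_zero, div_zero]
    positivity
  · have hcut := two_mul_vol_le G A
    have hvm := vol_le_two_mul_numEdges G A
    rw [div_le_div_iff₀ (by positivity) two_pos]
    nlinarith

noncomputable def communityTerm (A : Finset V) : ℝ := twoE G A - vol G A ^ 2 / (2 * numEdges G)

lemma neg_half_vol_le_communityTerm (A : Finset V) : -(vol G A / 2) ≤ communityTerm G A := by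
  rw [communityTerm]
  linarith [vol_sq_div_le G A, twoE_nonneg G A]

lemma communityTerm_le_vol (A : Finset V) : communityTerm G A ≤ vol G A := by
  have : 0 ≤ vol G A ^ 2 / (2 * numEdges G) := by
    have := numEdges_nonneg G
    positivity
  rw [communityTerm]
  linarith [twoE_le_vol G A]

variable {P : Type*}

lemma sum_vol_part (π : V → P) : ∑ p ∈ univ.image π, vol G (part π p) = 2 * numEdges G :=
  (sum_fiberwise_of_maps_to (fun v _ => mem_image_of_mem π (mem_univ v)) _).trans (vol_univ G)

lemma snapTerm_eq_sum_communityTerm (π : V → P) :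
    snapTerm G π = ∑ p ∈ univ.image π, communityTerm G (part π p) :=
  rfl

lemma neg_numEdges_le_snapTerm (π : V → P) : -numEdges G ≤ snapTerm G π := by
  have h := sum_le_sum fun p (_ : p ∈ univ.image π) =>
    neg_half_vol_le_communityTerm G (part π p)
  rw [sum_neg_distrib, ← sum_div, sum_vol_part, ← snapTerm_eq_sum_communityTerm] at h
  linarith

lemma snapTerm_le (π : V → P) : snapTerm G π ≤ 2 * numEdges G :=
  (sum_le_sum fun p _ => communityTerm_le_vol G (part π p)).trans (sum_vol_part G π).le

end Graph

lemma loyalty_nonneg {V P : Type*} [Fintype V] (T : ℕ) (π : V → ℕ → P) : 0 ≤ loyalty T π :=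
  sum_nonneg fun _ _ => sum_nonneg fun _ _ => by positivity

lemma loyalty_le {V P : Type*} [Fintype V] {T : ℕ} (hT : 1 ≤ T) (π : V → ℕ → P) :
    loyalty T π ≤ Fintype.card V * ((T : ℝ) - 1) := by
  calc loyalty T π ≤ ∑ _v : V, ∑ _t ∈ Icc 1 (T - 1), (1 : ℝ) :=
        sum_le_sum fun _ _ => sum_le_sum fun _ _ => by split <;> norm_num
    _ = Fintype.card V * ((T : ℝ) - 1) := by
        simp [Nat.cast_sub hT, mul_sub]

lemma qTilde_eq {V P : Type*} [Fintype V] (G : ℕ → SimpleGraph V) (T : ℕ) (ω : ℝ)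
    (π : V → ℕ → P) :
    qTilde G T ω π = (∑ t ∈ Icc 1 T, snapTerm (G t) fun v => π v t) + ω * loyalty T π :=
  rfl

lemma neg_half_le_div_and_div_le_one {a b : ℝ} (hlo : -(b / 2) ≤ a) (hhi : a ≤ b) :
    -(1 / 2) ≤ a / b ∧ a / b ≤ 1 := by
  rcases (show 0 ≤ b by linarith).eq_or_lt with hb | hb
  · simp [← hb]
  · constructor
    · rw [le_div_iff₀ hb]; linarith
    · rwa [div_le_one hb]

theorem temporalModularity_bounds_general {V : Type*} [Fintype V] {P : Type*}
    (T : ℕ) (hT : 1 ≤ T) (G : ℕ → SimpleGraph V)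
    (ω : ℝ) (hω : 0 ≤ ω) (π : V → ℕ → P) :
    -(1 / 2) ≤ qTemp G T ω π ∧ qTemp G T ω π ≤ 1 := by
  have hsnap_lo := sum_le_sum fun t (_ : t ∈ Icc 1 T) =>
    neg_numEdges_le_snapTerm (G t) fun v => π v t
  have hsnap_hi := sum_le_sum fun t (_ : t ∈ Icc 1 T) => snapTerm_le (G t) fun v => π v t
  rw [sum_neg_distrib] at hsnap_lo
  rw [← mul_sum] at hsnap_hi
  have hloy_lo := mul_nonneg hω (loyalty_nonneg T π)
  have hloy_hi := mul_le_mul_of_nonneg_left (loyalty_le hT π) hω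
  have hslack : 0 ≤ ω * Fintype.card V * ((T : ℝ) - 1) :=
    mul_nonneg (mul_nonneg hω (Nat.cast_nonneg _)) (sub_nonneg.mpr (by exact_mod_cast hT))
  have hmu : 2 * mu G T ω =
      ω * Fintype.card V * ((T : ℝ) - 1) + 2 * ∑ t ∈ Icc 1 T, numEdges (G t) := by
    rw [mu]; ring
  apply neg_half_le_div_and_div_le_one
  · rw [hmu, qTilde_eq]; linarith
  · rw [hmu, qTilde_eq]; linarith

/-- For every temporal graph with lifetime `T` in which every snapshot
has at least one edge, every tuning parameter `ω ≥ 0`, and every partition `π`,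
the temporal modularity satisfies `−1/2 ≤ q_ω(𝒢,𝒜) ≤ 1`. -/
theorem temporalModularity_bounds {V : Type*} [Fintype V] {P : Type*}
    (T : ℕ) (hT : 1 ≤ T) (G : ℕ → SimpleGraph V)
    (hE : ∀ t ∈ Icc 1 T, (G t).edgeSet.Nonempty)
    (ω : ℝ) (hω : 0 ≤ ω) (π : V → ℕ → P) :
    -(1 / 2) ≤ qTemp G T ω π ∧ qTemp G T ω π ≤ 1 :=
  temporalModularity_bounds_general T hT G ω hω π

end TemporalModularity
end

section
/- Let 𝒢 be a temporal graph with n vertices and lifetime T in which every snapshot has at least one edge, let ω ≥ 0, let k ≥ 1, and let 𝒜 be a partition of 𝒢 given by π: V × {1,…,T} → P for some finite label set P. Choose a function f: P → {1,…,k} uniformly at random and let 𝒝 be the partition given by f ∘ π (merging parts of 𝒜 that receive the same label). Then the expected temporal modularity satisfies E[q_ω(𝒢,𝒝)] = (1 − 1/k)·q_ω(𝒢,𝒜) + n·ω·(T−1)/(2·k·μ_ω(𝒢)). -/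
open Finset
open scoped Classical

namespace TemporalModularity

/-! For a uniformly random `f : P → β` with `|β| = k`, the event `f p = f q` has probability `1`
if `p = q` and `1/k` otherwise, so its expectation is `(1 - 1/k)·1[p = q] + 1/k`. Both the
modularity terms and the loyalty term are linear combinations of such indicators: the modularity
term of a snapshot has the entries of the modularity matrix as weights, and these sum to zero, so
only the factor `1 - 1/k` survives; the loyalty term has `n (T - 1)` unit weights, which produce the
additive constant. -/

section RandomLabelling

variable {P β : Type*} [Fintype P] [Fintype β]

theorem sum_ite_apply_eq_apply_of_ne {p q : P} (hpq : p ≠ q) :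
    ∑ f : P → β, (if f p = f q then (1 : ℝ) else 0) = Fintype.card ({j // j ≠ p} → β) := by
  rw [← (Equiv.funSplitAt p β).symm.sum_comp, Fintype.sum_prod_type_right]
  simp [Equiv.funSplitAt, Equiv.piSplitAt, hpq.symm]

theorem card_fun_eq_card_mul (p : P) :
    Fintype.card (P → β) = Fintype.card β * Fintype.card ({j // j ≠ p} → β) := by
  rw [Fintype.card_congr (Equiv.funSplitAt p β), Fintype.card_prod]

theorem sum_ite_apply_eq_apply [Nonempty β] (p q : P) :
    ∑ f : P → β, (if f p = f q then (1 : ℝ) else 0) =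
      Fintype.card (P → β) *
        ((1 - 1 / Fintype.card β) * (if p = q then 1 else 0) + 1 / Fintype.card β) := by
  by_cases hpq : p = q
  · simp [hpq]
  · have hβ : (Fintype.card β : ℝ) ≠ 0 := Nat.cast_ne_zero.mpr Fintype.card_ne_zero
    rw [sum_ite_apply_eq_apply_of_ne hpq, card_fun_eq_card_mul p, if_neg hpq, mul_zero,
      zero_add]
    push_cast
    field_simp

theorem sum_sum_mul_ite_apply_eq_apply [Nonempty β] {ι : Type*} (s : Finset ι) (w : ι → ℝ)
    (a b : ι → P) :
    ∑ f : P → β, ∑ i ∈ s, w i * (if f (a i) = f (b i) then 1 else 0) =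
      Fintype.card (P → β) * ((1 - 1 / Fintype.card β) *
        ∑ i ∈ s, w i * (if a i = b i then 1 else 0) + 1 / Fintype.card β * ∑ i ∈ s, w i) := by
  rw [Finset.sum_comm]
  simp_rw [← Finset.mul_sum, sum_ite_apply_eq_apply]
  simp only [Finset.mul_sum, ← Finset.sum_add_distrib]
  exact Finset.sum_congr rfl fun i _ => by ring

end RandomLabelling

section Modularity

variable {V : Type*} [Fintype V]

noncomputable def modularityMatrix (G : SimpleGraph V) (u v : V) : ℝ :=
  (if G.Adj u v then 1 else 0) - deg G u * deg G v / (2 * numEdges G)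

theorem sum_deg (G : SimpleGraph V) : ∑ v, deg G v = 2 * numEdges G := by
  rw [numEdges]; ring

theorem sum_sum_modularityMatrix (G : SimpleGraph V) :
    ∑ u, ∑ v, modularityMatrix G u v = 0 := by
  have hA : ∑ u, ∑ v, (if G.Adj u v then (1 : ℝ) else 0) = 2 * numEdges G := sum_deg G
  -- `x * x / x = x` holds also for `x = 0`
  have hdd : ∑ u, ∑ v, deg G u * deg G v / (2 * numEdges G) = 2 * numEdges G := by
    simp_rw [← Finset.sum_div, ← Finset.sum_mul_sum, sum_deg, mul_self_div_self]
  simp only [modularityMatrix, Finset.sum_sub_distrib, hA, hdd, sub_self]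

theorem twoE_sub_vol_sq_div (G : SimpleGraph V) (A : Finset V) :
    twoE G A - vol G A ^ 2 / (2 * numEdges G) = ∑ u ∈ A, ∑ v ∈ A, modularityMatrix G u v := by
  simp only [modularityMatrix, Finset.sum_sub_distrib, twoE, vol, sq, Finset.sum_mul_sum,
    Finset.sum_div]

theorem snapTerm_eq_sum_modularityMatrix {P : Type*} (G : SimpleGraph V) (π : V → P) :
    snapTerm G π = ∑ u, ∑ v, modularityMatrix G u v * (if π u = π v then 1 else 0) := by
  have hrow : ∀ u, ∑ v ∈ part π (π u), modularityMatrix G u v =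
      ∑ v, modularityMatrix G u v * (if π u = π v then 1 else 0) := fun u => by
    simp only [part, Finset.sum_filter, mul_ite, mul_one, mul_zero, eq_comm]
  rw [snapTerm, ← Finset.sum_fiberwise_of_maps_to (g := π) (t := univ.image π)
    (fun u _ => Finset.mem_image_of_mem π (Finset.mem_univ u))]
  refine Finset.sum_congr rfl fun p _ => ?_
  rw [twoE_sub_vol_sq_div]
  refine Finset.sum_congr rfl fun u hu => ?_
  rw [← hrow, (Finset.mem_filter.mp hu).2]

theorem qTilde_eq_sum_snapTerm_add_loyalty {P : Type*} (G : ℕ → SimpleGraph V) (T : ℕ) (ω : ℝ)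
    (π : V → ℕ → P) :
    qTilde G T ω π = ∑ t ∈ Icc 1 T, snapTerm (G t) (π · t) + ω * loyalty T π :=
  rfl

end Modularity

section RandomMerge

variable {V P β : Type*} [Fintype V] [Fintype P] [Fintype β] [Nonempty β]

theorem sum_snapTerm_comp (G : SimpleGraph V) (π : V → P) :
    ∑ f : P → β, snapTerm G (fun v => f (π v)) =
      Fintype.card (P → β) * ((1 - 1 / Fintype.card β) * snapTerm G π) := by
  have h := sum_sum_mul_ite_apply_eq_apply (β := β) (univ ×ˢ univ : Finset (V × V))
    (fun x => modularityMatrix G x.1 x.2) (fun x => π x.1) (fun x => π x.2)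
  simp only [Finset.sum_product, sum_sum_modularityMatrix, mul_zero, add_zero] at h
  simpa only [snapTerm_eq_sum_modularityMatrix] using h

theorem sum_loyalty_comp (T : ℕ) (π : V → ℕ → P) :
    ∑ f : P → β, loyalty T (fun v t => f (π v t)) =
      Fintype.card (P → β) * ((1 - 1 / Fintype.card β) * loyalty T π +
        Fintype.card V * (T - 1 : ℕ) / Fintype.card β) := by
  have h := sum_sum_mul_ite_apply_eq_apply (β := β) (univ ×ˢ Icc 1 (T - 1))
    (fun _ => 1) (fun x => π x.1 x.2) (fun x => π x.1 (x.2 + 1))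
  rw [Finset.sum_const, Finset.card_product, Finset.card_univ, Nat.card_Icc,
    Nat.add_sub_cancel] at h
  simp only [Finset.sum_product, one_mul] at h
  simp only [loyalty, h, nsmul_eq_mul, Nat.cast_mul]
  ring

theorem sum_qTilde_comp (G : ℕ → SimpleGraph V) (T : ℕ) (ω : ℝ) (π : V → ℕ → P) :
    ∑ f : P → β, qTilde G T ω (fun v t => f (π v t)) =
      Fintype.card (P → β) * ((1 - 1 / Fintype.card β) * qTilde G T ω π +
        ω * Fintype.card V * (T - 1 : ℕ) / Fintype.card β) := by
  simp only [qTilde_eq_sum_snapTerm_add_loyalty, Finset.sum_add_distrib, ← Finset.mul_sum]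
  rw [Finset.sum_comm, Finset.sum_congr rfl fun t _ => sum_snapTerm_comp (G t) (π · t),
    sum_loyalty_comp, ← Finset.mul_sum, ← Finset.mul_sum]
  ring

end RandomMerge

theorem temporalModularity_random_merge_expectation_general {V : Type*} [Fintype V]
    {P : Type*} [Fintype P]
    (T : ℕ) (hT : 1 ≤ T) (G : ℕ → SimpleGraph V)
    (ω : ℝ) (k : ℕ) (hk : 1 ≤ k) (π : V → ℕ → P) :
    (∑ f : P → Fin k, qTemp G T ω (fun v t => f (π v t))) /
        (Fintype.card (P → Fin k) : ℝ) =
      (1 - 1 / (k : ℝ)) * qTemp G T ω π +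
        (Fintype.card V : ℝ) * ω * ((T : ℝ) - 1) / (2 * (k : ℝ) * mu G T ω) := by
  have : NeZero k := ⟨by omega⟩
  have hN : (Fintype.card (P → Fin k) : ℝ) ≠ 0 := Nat.cast_ne_zero.mpr Fintype.card_ne_zero
  simp only [qTemp, ← Finset.sum_div, sum_qTilde_comp, Fintype.card_fin, Nat.cast_sub hT,
    Nat.cast_one]
  rw [div_right_comm, mul_div_cancel_left₀ _ hN]
  ring

/-- Let `π : V × [T] → P` be a partition of `𝒢` with finite label set
`P`, and let a function `f : P → [k]` be chosen uniformly at random; let `𝒝` be the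
partition `f ∘ π`.  Then the expected temporal modularity of `𝒝` equals
`(1 − 1/k)·q_ω(𝒢,𝒜) + n ω (T−1)/(2 k μ_ω(𝒢))`. -/
theorem temporalModularity_random_merge_expectation {V : Type*} [Fintype V]
    {P : Type*} [Fintype P]
    (T : ℕ) (hT : 1 ≤ T) (G : ℕ → SimpleGraph V)
    (hE : ∀ t ∈ Icc 1 T, (G t).edgeSet.Nonempty)
    (ω : ℝ) (hω : 0 ≤ ω) (k : ℕ) (hk : 1 ≤ k) (π : V → ℕ → P) :
    (∑ f : P → Fin k, qTemp G T ω (fun v t => f (π v t))) /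
        (Fintype.card (P → Fin k) : ℝ) =
      (1 - 1 / (k : ℝ)) * qTemp G T ω π +
        (Fintype.card V : ℝ) * ω * ((T : ℝ) - 1) / (2 * (k : ℝ) * mu G T ω) :=
  temporalModularity_random_merge_expectation_general T hT G ω k hk π

end TemporalModularity
end
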